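/- arXiv:1405.7234 — 4 statements merged into one kernel-verified Lean document; each statement's English description precedes it below -/
import Mathlib

section
/- Let N be a nilpotent endomorphism of a finite-dimensional rational vector space V, centered at weight 0, and suppose W_• is an increasing filtration W_{-k} ⊆ ⋯ ⊆ W_0 ⊆ ⋯ ⊆ W_k = V satisfying the two defining properties of the monodromy weight filtration: N(W_j) ⊆ W_{j-2} for all j, and N^j induces an isomorphism Gr^W_j V ≅ Gr^W_{-j} V for all j ≥ 0. Then such a filtration W_•(N) is unique. -/
/-- `W` is a monodromy weight filtration (centered at 0) for the nilpotent endomorphism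
`N` : it is increasing and exhaustive (`W_k = V` for some `k`, `W_j = 0` for `j < -k`),
`N(W_j) ⊆ W_{j-2}`, and for each `j ≥ 0` the map induced by `N^j` on graded pieces
`Gr_j → Gr_{-j}` is bijective (expressed without quotients: surjectivity mod `W_{-j-1}`
and injectivity mod `W_{j-1}`). -/
def IsWeightFiltration {V : Type*} [AddCommGroup V] [Module ℚ V]
    (N : Module.End ℚ V) (W : ℤ → Submodule ℚ V) : Prop :=
  Monotone W ∧
  (∃ k : ℤ, W k = ⊤ ∧ ∀ j : ℤ, j < -k → W j = ⊥) ∧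
  (∀ j : ℤ, (W j).map N ≤ W (j - 2)) ∧
  (∀ j : ℕ,
    (∀ v ∈ W (-(j : ℤ)), ∃ u ∈ W (j : ℤ), (N ^ j) u - v ∈ W (-(j : ℤ) - 1)) ∧
    (∀ u ∈ W (j : ℤ), (N ^ j) u ∈ W (-(j : ℤ) - 1) → u ∈ W ((j : ℤ) - 1)))

/-- Iterating `N(W_i) ⊆ W_{i-2}`. -/
lemma weight_pow_mem {V : Type*} [AddCommGroup V] [Module ℚ V]
    (N : Module.End ℚ V) (W : ℤ → Submodule ℚ V)
    (hmap : ∀ j : ℤ, (W j).map N ≤ W (j - 2)) :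
    ∀ (p : ℕ) (i : ℤ) (u : V), u ∈ W i → (N ^ p) u ∈ W (i - 2 * p) := by
  intro p
  induction p with
  | zero => intro i u hu; simpa using hu
  | succ p ih =>
    intro i u hu
    have h1 := ih i u hu
    have h2 := hmap (i - 2 * p) (Submodule.mem_map_of_mem h1)
    have heq : (N ^ (p + 1)) u = N ((N ^ p) u) := by
      rw [pow_succ']; rfl
    have hidx : i - 2 * p - 2 = i - 2 * (p + 1 : ℕ) := by push_cast; ring
    rw [heq]
    rwa [hidx] at h2

/-- The two characterizations of the adjacent pieces of a weight filtration. -/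
lemma weight_char {V : Type*} [AddCommGroup V] [Module ℚ V]
    (N : Module.End ℚ V) (W : ℤ → Submodule ℚ V)
    (h : IsWeightFiltration N W) (j : ℕ) :
    W ((j : ℤ) - 1) = W (j : ℤ) ⊓ Submodule.comap (N ^ j) (W (-(j : ℤ) - 1)) ∧
    W (-(j : ℤ)) = Submodule.map (N ^ j) (W (j : ℤ)) ⊔ W (-(j : ℤ) - 1) := by
  obtain ⟨hmono, _, hmap, hgr⟩ := h
  have hpow := weight_pow_mem N W hmap
  constructor
  · apply le_antisymm
    · intro u hu
      refine ⟨hmono (by omega) hu, ?_⟩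
      have := hpow j ((j : ℤ) - 1) u hu
      have hidx : (j : ℤ) - 1 - 2 * j = -(j : ℤ) - 1 := by ring
      rw [hidx] at this
      exact this
    · rintro u ⟨h1, h2⟩
      exact (hgr j).2 u h1 h2
  · apply le_antisymm
    · intro v hv
      obtain ⟨u, hu, hsub⟩ := (hgr j).1 v hv
      have hv' : v = (N ^ j) u + (-((N ^ j) u - v)) := by abel
      rw [hv']
      exact Submodule.add_mem_sup (Submodule.mem_map_of_mem hu)
        (Submodule.neg_mem _ hsub)
    · apply sup_le
      · rintro _ ⟨u, hu, rfl⟩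
        have := hpow j (j : ℤ) u hu
        have hidx : (j : ℤ) - 2 * j = -(j : ℤ) := by ring
        rwa [hidx] at this
      · exact hmono (by omega)

/-- Uniqueness of the monodromy weight filtration of a nilpotent endomorphism. -/
theorem stmt2 {V : Type*} [AddCommGroup V] [Module ℚ V] [FiniteDimensional ℚ V]
    (N : Module.End ℚ V) (hN : IsNilpotent N)
    (W W' : ℤ → Submodule ℚ V)
    (hW : IsWeightFiltration N W) (hW' : IsWeightFiltration N W') :
    W = W' := by
  obtain ⟨k, hk, hk'⟩ := hW.2.1
  obtain ⟨l, hl, hl'⟩ := hW'.2.1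
  set m : ℕ := (k ⊔ l).toNat with hm
  have hkm : k ≤ (m : ℤ) := le_trans le_sup_left (Int.self_le_toNat _)
  have hlm : l ≤ (m : ℤ) := le_trans le_sup_right (Int.self_le_toNat _)
  have htop : ∀ i : ℤ, (m : ℤ) ≤ i → W i = ⊤ ∧ W' i = ⊤ := by
    intro i hi
    constructor
    · exact eq_top_iff.2 (hk ▸ hW.1 (le_trans hkm hi))
    · exact eq_top_iff.2 (hl ▸ hW'.1 (le_trans hlm hi))
  have hbot : ∀ i : ℤ, i < -(m : ℤ) → W i = ⊥ ∧ W' i = ⊥ := by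
    intro i hi
    exact ⟨hk' i (by omega), hl' i (by omega)⟩
  -- downward double induction
  have main : ∀ d : ℕ, d ≤ m →
      W ((m : ℤ) - d) = W' ((m : ℤ) - d) ∧
      W (-((m : ℤ) - d) - 1) = W' (-((m : ℤ) - d) - 1) := by
    intro d
    induction d with
    | zero =>
      intro _
      simp only [Nat.cast_zero, sub_zero]
      refine ⟨(htop m le_rfl).1.trans (htop m le_rfl).2.symm, ?_⟩
      exact (hbot (-(m : ℤ) - 1) (by omega)).1.trans
        (hbot (-(m : ℤ) - 1) (by omega)).2.symm
    | succ d ih =>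
      intro hd
      obtain ⟨ih1, ih2⟩ := ih (by omega)
      set j : ℕ := m - d with hj
      have hjz : (j : ℤ) = (m : ℤ) - d := by omega
      have e1 : ((m : ℤ) - (d + 1 : ℕ)) = (j : ℤ) - 1 := by omega
      have e2 : (-((m : ℤ) - (d + 1 : ℕ)) - 1) = -(j : ℤ) := by omega
      have c := weight_char N W hW j
      have c' := weight_char N W' hW' j
      rw [← hjz] at ih1 ih2
      constructor
      · rw [e1, c.1, c'.1, ih1, ih2]
      · rw [e2, c.2, c'.2, ih1, ih2]
  funext i
  rcases le_or_gt (m : ℤ) i with hi | hi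
  · exact ((htop i hi).1).trans ((htop i hi).2).symm
  rcases lt_or_ge i (-(m : ℤ)) with hi' | hi'
  · exact ((hbot i hi').1).trans ((hbot i hi').2).symm
  rcases le_or_gt 0 i with hi0 | hi0
  · -- 0 ≤ i < m : use first part with d = m - i
    have hd : (((m : ℤ) - i).toNat : ℤ) = (m : ℤ) - i := by omega
    have := (main ((m : ℤ) - i).toNat (by omega)).1
    rw [hd] at this
    simpa using this
  · -- -m ≤ i < 0 : use second part with d = m + 1 + i
    have hd : ((((m : ℤ) + 1 + i).toNat : ℤ)) = (m : ℤ) + 1 + i := by omega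
    have := (main ((m : ℤ) + 1 + i).toNat (by omega)).2
    rw [hd] at this
    have he : -((m : ℤ) - ((m : ℤ) + 1 + i)) - 1 = i := by ring
    rwa [he] at this
end

section
/- Let R = ℂ[x,y]/(xy). The module of Kähler differentials Ω¹_{R/ℂ} has a torsion submodule τ generated by the elements y·dx and x·dy (equivalently by the class of d(xy)); this torsion submodule is nonzero, is annihilated by the maximal ideal (x,y), and the quotient Ω¹_{R/ℂ}/τ is a torsion-free R-module. -/
/-!
The ideals `(x)` and `(y)` of `R` are prime (their quotients are polynomial rings in one
variable), neither contains the other generator, and `(x) ∩ (y) = 0`. Hence no nonzerodivisor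
lies in `(x)` or `(y)`, and `x + y` is a nonzerodivisor.

The algebra presentation of `R` gives `Ω = (R dx ⊕ R dy) / R (y dx + x dy)`. If
`r (a dx + b dy) = 0` with `r` a nonzerodivisor, then `r a = c y` and `r b = c x`, so
`a ∈ (y)`, `b ∈ (x)`, i.e. `a dx + b dy ∈ span {y dx, x dy}`. Conversely, since `xy = 0` and
`y dx = -x dy`, both generators are killed by `x` and by `y`, hence by `x + y`. Finally
`y dx ≠ 0`: otherwise `(y, 0) = c (y, x)`, which forces `c ∈ (y)` and `c - 1 ∈ (x)`, impossible
since `x` and `y` both vanish at the origin.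
-/

open MvPolynomial

/-- `R = ℂ[x,y]/(xy)`. -/
abbrev Rxy : Type := MvPolynomial (Fin 2) ℂ ⧸
  Ideal.span {(X 0 * X 1 : MvPolynomial (Fin 2) ℂ)}

/-- The class of `x` in `R`. -/
noncomputable def xR : Rxy := Ideal.Quotient.mk _ (X 0)

/-- The class of `y` in `R`. -/
noncomputable def yR : Rxy := Ideal.Quotient.mk _ (X 1)

open KaehlerDifferential

namespace Rxy

/-- `gen 0 = xR` and `gen 1 = yR` by definition; the indexing lets the statements that are
symmetric in `x` and `y` be proved once. -/
noncomputable def gen (i : Fin 2) : Rxy := Ideal.Quotient.mk _ (X i)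

lemma X_dvd_X_zero_mul_X_one (i : Fin 2) : (X i : MvPolynomial (Fin 2) ℂ) ∣ X 0 * X 1 := by
  fin_cases i
  exacts [dvd_mul_right _ _, dvd_mul_left _ _]

lemma gen_mul_gen {i j : Fin 2} (hij : i ≠ j) : gen i * gen j = 0 := by
  rw [gen, gen, ← map_mul, Ideal.Quotient.eq_zero_iff_mem, Ideal.mem_span_singleton]
  fin_cases i <;> fin_cases j <;> simp_all [mul_comm]

lemma isPrime_span_gen (i : Fin 2) : (Ideal.span {gen i}).IsPrime := by
  have : (Ideal.span {(X i : MvPolynomial (Fin 2) ℂ)}).IsPrime :=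
    (Ideal.span_singleton_prime (X_ne_zero i)).mpr X_prime
  rw [gen, ← Set.image_singleton (f := Ideal.Quotient.mk _), ← Ideal.map_span]
  refine Ideal.map_isPrime_of_surjective Ideal.Quotient.mk_surjective ?_
  rw [Ideal.mk_ker, Ideal.span_singleton_le_span_singleton]
  exact X_dvd_X_zero_mul_X_one i

lemma gen_notMem_span_gen {i j : Fin 2} (hij : i ≠ j) : gen i ∉ Ideal.span {gen j} := by
  intro h
  obtain ⟨c, hc⟩ := Ideal.mem_span_singleton'.mp h
  obtain ⟨p, rfl⟩ := Ideal.Quotient.mk_surjective c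
  rw [gen, gen, ← map_mul, Ideal.Quotient.eq, Ideal.mem_span_singleton] at hc
  have : (X j : MvPolynomial (Fin 2) ℂ) ∣ X i :=
    (dvd_sub_right (dvd_mul_left _ _)).mp ((X_dvd_X_zero_mul_X_one j).trans hc)
  exact hij (X_dvd_X.mp this).symm

lemma mem_span_gen_of_mul_gen_mem {i j : Fin 2} (hij : i ≠ j) {a : Rxy}
    (h : a * gen i ∈ Ideal.span {gen j}) : a ∈ Ideal.span {gen j} :=
  ((isPrime_span_gen j).mem_or_mem h).resolve_right (gen_notMem_span_gen hij)

lemma eq_zero_of_mem_span_gen_of_mem_span_gen {i j : Fin 2} (hij : i ≠ j) {s : Rxy}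
    (hi : s ∈ Ideal.span {gen i}) (hj : s ∈ Ideal.span {gen j}) : s = 0 := by
  obtain ⟨a, rfl⟩ := Ideal.mem_span_singleton'.mp hi
  obtain ⟨b, rfl⟩ := Ideal.mem_span_singleton'.mp (mem_span_gen_of_mul_gen_mem hij hj)
  rw [mul_assoc, mul_comm (gen j), gen_mul_gen hij, mul_zero]

lemma mem_span_gen_of_mul_mem {r : Rxy} (hr : r ∈ nonZeroDivisors Rxy) {i : Fin 2} {a : Rxy}
    (h : r * a ∈ Ideal.span {gen i}) : a ∈ Ideal.span {gen i} := by
  refine ((isPrime_span_gen i).mem_or_mem h).resolve_left fun hri ↦ ?_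
  obtain ⟨j, hji⟩ := exists_ne i
  obtain ⟨c, rfl⟩ := Ideal.mem_span_singleton'.mp hri
  have : gen j = 0 := (mem_nonZeroDivisors_iff_right.mp hr) _ (by
    rw [mul_comm, mul_assoc, gen_mul_gen hji.symm, mul_zero])
  exact gen_notMem_span_gen hji (this ▸ zero_mem _)

lemma mem_span_gen_of_mul_gen_add_gen_eq_zero {i j : Fin 2} (hij : i ≠ j) {s : Rxy}
    (hs : s * (gen i + gen j) = 0) : s ∈ Ideal.span {gen i} := by
  refine ((isPrime_span_gen i).mem_or_mem (hs ▸ zero_mem _)).resolve_right ?_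
  rw [Ideal.add_mem_iff_right _ (Ideal.mem_span_singleton_self _)]
  exact gen_notMem_span_gen hij.symm

lemma xR_mul_yR : xR * yR = 0 := gen_mul_gen zero_ne_one

lemma xR_add_yR_mem_nonZeroDivisors : xR + yR ∈ nonZeroDivisors Rxy :=
  mem_nonZeroDivisors_iff_right.mpr fun s hs ↦ eq_zero_of_mem_span_gen_of_mem_span_gen
    zero_ne_one (mem_span_gen_of_mul_gen_add_gen_eq_zero zero_ne_one hs)
    (mem_span_gen_of_mul_gen_add_gen_eq_zero one_ne_zero (by rwa [add_comm]))

noncomputable def evalZero : Rxy →+* ℂ :=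
  Ideal.Quotient.lift _ (eval 0) fun p hp ↦ by
    obtain ⟨q, rfl⟩ := Ideal.mem_span_singleton'.mp hp
    simp

lemma evalZero_eq_zero_of_mem_span_gen {i : Fin 2} {a : Rxy} (h : a ∈ Ideal.span {gen i}) :
    evalZero a = 0 := by
  obtain ⟨c, rfl⟩ := Ideal.mem_span_singleton'.mp h
  simp [evalZero, gen]

lemma mul_yR_ne_yR_of_mul_xR_eq_zero {c : Rxy} (h : c * xR = 0) : c * yR ≠ yR := by
  intro (hc : c * gen 1 = gen 1)
  have h₁ : evalZero c = 0 :=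
    evalZero_eq_zero_of_mem_span_gen (mem_span_gen_of_mul_gen_mem (i := 0) (j := 1) zero_ne_one
      (h ▸ zero_mem _))
  have h₀ : evalZero (c - 1) = 0 :=
    evalZero_eq_zero_of_mem_span_gen (mem_span_gen_of_mul_gen_mem (i := 1) (j := 0) one_ne_zero
      (by rw [sub_mul, one_mul, hc, sub_self]; exact zero_mem _))
  simp [h₁] at h₀

noncomputable def presentation : Algebra.Presentation ℂ Rxy (Fin 2) Unit where
  __ := Algebra.Generators.naive
  relation _ := X 0 * X 1
  span_range_relation_eq_ker := by rw [Algebra.Generators.ker_naive, Set.range_const]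

noncomputable def π : (Fin 2 →₀ Rxy) →ₗ[Rxy] Ω[Rxy⁄ℂ] :=
  presentation.differentialsSolution.π

lemma π_apply (f : Fin 2 →₀ Rxy) : π f = f 0 • D ℂ Rxy xR + f 1 • D ℂ Rxy yR := by
  change Finsupp.linearCombination Rxy (fun i : Fin 2 ↦ D ℂ Rxy (Ideal.Quotient.mk _ (X i))) f =
    _
  rw [Finsupp.linearCombination_apply,
    Finsupp.sum_fintype _ _ fun i ↦ zero_smul Rxy (D ℂ Rxy (Ideal.Quotient.mk _ (X i))),
    Fin.sum_univ_two]
  rfl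

lemma surjective_π : Function.Surjective π :=
  presentation.differentialsSolution_isPresentation.surjective_π

lemma ker_π :
    LinearMap.ker π = Submodule.span Rxy {Finsupp.single 0 yR + Finsupp.single 1 xR} := by
  refine presentation.differentialsSolution_isPresentation.ker_π.trans ?_
  let : Unique presentation.differentialsRelations.R := inferInstanceAs (Unique Unit)
  rw [Set.range_unique]
  congr 2
  simp only [Algebra.Presentation.differentialsRelations, presentation, Fin.isValue,
    Derivation.leibniz, map_add, map_smul, mvPolynomialBasis_repr_D_X, Finsupp.smul_single,
    smul_eq_mul, mul_one]
  rw [Finsupp.mapRange_add (map_add _), Finsupp.mapRange_single, Finsupp.mapRange_single, add_comm]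
  rfl

lemma exists_smul_D_add_smul_D_eq (ω : Ω[Rxy⁄ℂ]) :
    ∃ a b : Rxy, a • D ℂ Rxy xR + b • D ℂ Rxy yR = ω := by
  obtain ⟨f, rfl⟩ := surjective_π ω
  exact ⟨f 0, f 1, (π_apply f).symm⟩

lemma exists_of_smul_D_add_smul_D_eq_zero {a b : Rxy}
    (h : a • D ℂ Rxy xR + b • D ℂ Rxy yR = 0) : ∃ c, c * yR = a ∧ c * xR = b := by
  let f : Fin 2 →₀ Rxy := Finsupp.single 0 a + Finsupp.single 1 b
  have hf : f ∈ LinearMap.ker π := by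
    rw [LinearMap.mem_ker, π_apply]
    simpa [f] using h
  rw [ker_π, Submodule.mem_span_singleton] at hf
  obtain ⟨c, hc⟩ := hf
  refine ⟨c, ?_, ?_⟩
  · simpa [f] using DFunLike.congr_fun hc 0
  · simpa [f] using DFunLike.congr_fun hc 1

lemma yR_smul_D_xR_add_xR_smul_D_yR : yR • D ℂ Rxy xR + xR • D ℂ Rxy yR = 0 := by
  have h := (D ℂ Rxy).leibniz xR yR
  rw [xR_mul_yR, map_zero] at h
  rw [h, add_comm]

local notation "τ" => Submodule.span Rxy {yR • D ℂ Rxy xR, xR • D ℂ Rxy yR}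

lemma xR_mem_annihilator : xR ∈ Submodule.annihilator τ := by
  simp only [Submodule.mem_annihilator_span, Subtype.forall, Set.mem_insert_iff,
    Set.mem_singleton_iff, forall_eq_or_imp, forall_eq]
  constructor
  · linear_combination (norm := module) xR_mul_yR • D ℂ Rxy xR
  · linear_combination (norm := module)
      xR • yR_smul_D_xR_add_xR_smul_D_yR - xR_mul_yR • D ℂ Rxy xR

lemma yR_mem_annihilator : yR ∈ Submodule.annihilator τ := by
  simp only [Submodule.mem_annihilator_span, Subtype.forall, Set.mem_insert_iff,
    Set.mem_singleton_iff, forall_eq_or_imp, forall_eq]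
  constructor
  · linear_combination (norm := module)
      yR • yR_smul_D_xR_add_xR_smul_D_yR - xR_mul_yR • D ℂ Rxy yR
  · linear_combination (norm := module) xR_mul_yR • D ℂ Rxy yR

lemma mem_span_of_smul_eq_zero {r : Rxy} (hr : r ∈ nonZeroDivisors Rxy) {ω : Ω[Rxy⁄ℂ]}
    (h : r • ω = 0) : ω ∈ τ := by
  obtain ⟨a, b, rfl⟩ := exists_smul_D_add_smul_D_eq ω
  obtain ⟨c, hca, hcb⟩ := exists_of_smul_D_add_smul_D_eq_zero (a := r * a) (b := r * b)
    (by linear_combination (norm := module) h)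
  obtain ⟨a', rfl⟩ : ∃ a', a' * yR = a := Ideal.mem_span_singleton'.mp <|
    mem_span_gen_of_mul_mem hr (i := 1) <|
      hca ▸ Ideal.mul_mem_left _ _ (Ideal.mem_span_singleton_self _)
  obtain ⟨b', rfl⟩ : ∃ b', b' * xR = b := Ideal.mem_span_singleton'.mp <|
    mem_span_gen_of_mul_mem hr (i := 0) <|
      hcb ▸ Ideal.mul_mem_left _ _ (Ideal.mem_span_singleton_self _)
  exact Submodule.mem_span_pair.mpr ⟨a', b', by module⟩

lemma torsion_eq_span : Submodule.torsion Rxy Ω[Rxy⁄ℂ] = τ := by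
  refine le_antisymm (fun ω hω ↦ ?_) fun ω hω ↦ ?_
  · obtain ⟨⟨r, hr⟩, h⟩ := (Submodule.mem_torsion_iff ω).mp hω
    exact mem_span_of_smul_eq_zero hr h
  · refine (Submodule.mem_torsion_iff ω).mpr ⟨⟨_, xR_add_yR_mem_nonZeroDivisors⟩, ?_⟩
    exact Submodule.mem_annihilator.mp (add_mem xR_mem_annihilator yR_mem_annihilator) ω hω

lemma yR_smul_D_xR_ne_zero : yR • D ℂ Rxy xR ≠ 0 := by
  intro h
  obtain ⟨c, hcy, hcx⟩ := exists_of_smul_D_add_smul_D_eq_zero (a := yR) (b := 0)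
    (by rw [h, zero_smul Rxy (D ℂ Rxy yR), add_zero])
  exact mul_yR_ne_yR_of_mul_xR_eq_zero hcx hcy

end Rxy

/-- The torsion submodule `τ ⊆ Ω¹_{R/ℂ}` is generated by `y·dx` and `x·dy`, is
nonzero, is annihilated by the maximal ideal `(x,y)`, and `Ω¹_{R/ℂ}/τ` is
torsion-free. -/
theorem stmt11 :
    (Submodule.torsion Rxy (KaehlerDifferential ℂ Rxy)
      = Submodule.span Rxy
          {yR • (KaehlerDifferential.D ℂ Rxy) xR,
           xR • (KaehlerDifferential.D ℂ Rxy) yR}) ∧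
    Submodule.torsion Rxy (KaehlerDifferential ℂ Rxy) ≠ ⊥ ∧
    (∀ w ∈ Submodule.torsion Rxy (KaehlerDifferential ℂ Rxy),
      xR • w = 0 ∧ yR • w = 0) ∧
    Submodule.torsion Rxy
        ((KaehlerDifferential ℂ Rxy) ⧸
          Submodule.torsion Rxy (KaehlerDifferential ℂ Rxy)) = ⊥ := by
  refine ⟨Rxy.torsion_eq_span, ?_, fun w hw ↦ ?_, Submodule.QuotientTorsion.torsion_eq_bot⟩
  · rw [Rxy.torsion_eq_span, Submodule.ne_bot_iff]
    exact ⟨_, Submodule.subset_span (Set.mem_insert _ _), Rxy.yR_smul_D_xR_ne_zero⟩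
  · rw [Rxy.torsion_eq_span] at hw
    exact ⟨Submodule.mem_annihilator.mp Rxy.xR_mem_annihilator w hw,
      Submodule.mem_annihilator.mp Rxy.yR_mem_annihilator w hw⟩
end

section
/- Let R = ℂ[x,y]/(xy) and let L be the R-module with generators ξ, η and the single relation ξ + η = 0 (modeling Ω¹ with log poles relative to the base, generated by dx/x, dy/y with dx/x + dy/y = 0). Then L is free of rank 1 over R, and the R-linear map Ω¹_{R/ℂ} → L sending dx ↦ x·ξ and dy ↦ y·η is well-defined with kernel equal to the torsion submodule of Ω¹_{R/ℂ}. -/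
open MvPolynomial

/-- `L = R·ξ ⊕ R·η` modulo the single relation `ξ + η = 0` (modeling the relative
log differentials generated by `dx/x`, `dy/y` with `dx/x + dy/y = 0`). -/
abbrev Lmod : Type := (Fin 2 → Rxy) ⧸
  (Submodule.span Rxy {(![1, 1] : Fin 2 → Rxy)})

/-- The generator `ξ` of `L` (image of `dx/x`). -/
noncomputable def ξL : Lmod := Submodule.Quotient.mk ![1, 0]

/-- The generator `η` of `L` (image of `dy/y`). -/
noncomputable def ηL : Lmod := Submodule.Quotient.mk ![0, 1]

/-!
`L` is free on `ξ` via `(a, b) ↦ a - b`. The derivation `x ∂ₓ - y ∂ᵧ` of `ℂ[x,y]` kills `xy`, so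
it descends to `R` and induces `ψ : Ω¹ → R` with `dx ↦ x`, `dy ↦ -y`; composed with `R ≅ L` this
is the required map. A linear map into `R` kills torsion. Conversely, if `a dx + b dy ∈ ker ψ` then
`a x = b y`; restricting to the two axes shows `y ∣ a` and `x ∣ b`, so the form is a multiple of
`x dy`, which `x` and `y` both kill because `y dx = -x dy`. Hence it is killed by `x + y`, a
non-zero-divisor since it restricts to a non-zero-divisor on each axis.
-/

theorem MvPolynomial.X_dvd_sub_aeval_update_zero {σ R : Type*} [CommRing R] [DecidableEq σ]
    (i : σ) (p : MvPolynomial σ R) : X i ∣ p - aeval (Function.update X i 0) p := by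
  induction p using MvPolynomial.induction_on with
  | C c => simp
  | add p q hp hq => simpa only [map_add, add_sub_add_comm] using dvd_add hp hq
  | mul_X p j hp =>
    rw [map_mul, aeval_X]
    by_cases hj : j = i
    · subst hj
      simp
    · rw [Function.update_of_ne hj, ← sub_mul]
      exact hp.mul_right _

theorem KaehlerDifferential.span_D_image_eq_top_of_adjoin_eq_top {R S : Type*} [CommRing R]
    [CommRing S] [Algebra R S] {s : Set S} (hs : Algebra.adjoin R s = ⊤) :
    Submodule.span S (KaehlerDifferential.D R S '' s) = ⊤ := by
  rw [eq_top_iff, ← KaehlerDifferential.span_range_derivation, Submodule.span_le]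
  rintro _ ⟨x, rfl⟩
  have hx : x ∈ Algebra.adjoin R s := hs ▸ Algebra.mem_top
  induction hx using Algebra.adjoin_induction with
  | mem x hx => exact Submodule.subset_span ⟨x, hx, rfl⟩
  | algebraMap r => simp
  | add x y _ _ hx hy => rw [map_add]; exact add_mem hx hy
  | mul x y _ _ hx hy =>
    rw [Derivation.leibniz]
    exact add_mem (Submodule.smul_mem _ _ hy) (Submodule.smul_mem _ _ hx)

theorem LinearMap.torsion_le_ker {R M : Type*} [CommRing R] [AddCommGroup M] [Module R M]
    (f : M →ₗ[R] R) : Submodule.torsion R M ≤ LinearMap.ker f := by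
  rintro m ⟨r, hr⟩
  refine mem_nonZeroDivisors_iff_right.mp r.2 (f m) ?_
  rw [mul_comm, ← smul_eq_mul, ← map_smul, ← Submonoid.smul_def, hr, map_zero]

noncomputable def quotSpanOneOneEquiv (R : Type*) [CommRing R] :
    ((Fin 2 → R) ⧸ Submodule.span R {(![1, 1] : Fin 2 → R)}) ≃ₗ[R] R :=
  let f : (Fin 2 → R) →ₗ[R] R :=
    (LinearMap.proj 0 : (Fin 2 → R) →ₗ[R] R) - LinearMap.proj 1
  have hker : Submodule.span R {![1, 1]} = LinearMap.ker f := by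
    ext v
    simp only [Submodule.mem_span_singleton, LinearMap.mem_ker, f, LinearMap.sub_apply,
      LinearMap.proj_apply, sub_eq_zero]
    refine ⟨by rintro ⟨a, rfl⟩; simp, fun h ↦ ⟨v 0, ?_⟩⟩
    ext i; fin_cases i <;> simp [h]
  (Submodule.quotEquivOfEq _ _ hker).trans
    (f.quotKerEquivOfSurjective fun r ↦ ⟨![r, 0], by simp [f]⟩)

@[simp]
theorem quotSpanOneOneEquiv_mk {R : Type*} [CommRing R] (v : Fin 2 → R) :
    quotSpanOneOneEquiv R (Submodule.Quotient.mk v) = v 0 - v 1 := rfl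

theorem xR_mul_yR : xR * yR = 0 := by
  rw [xR, yR, ← map_mul, Ideal.Quotient.eq_zero_iff_mem]
  exact Ideal.mem_span_singleton_self _

noncomputable def restrictToAxis (i : Fin 2) : Rxy →ₐ[ℂ] MvPolynomial (Fin 2) ℂ :=
  Ideal.Quotient.liftₐ _ (aeval (Function.update X i 0)) fun p hp ↦ by
    obtain ⟨q, rfl⟩ := Ideal.mem_span_singleton'.mp hp
    fin_cases i <;> simp

@[simp]
theorem restrictToAxis_mk (i : Fin 2) (p : MvPolynomial (Fin 2) ℂ) :
    restrictToAxis i (Ideal.Quotient.mk _ p) = aeval (Function.update X i 0) p := rfl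

@[simp] theorem restrictToAxis_zero_xR : restrictToAxis 0 xR = 0 := by simp [xR]
@[simp] theorem restrictToAxis_zero_yR : restrictToAxis 0 yR = X 1 := by simp [yR]
@[simp] theorem restrictToAxis_one_xR : restrictToAxis 1 xR = X 0 := by simp [xR]
@[simp] theorem restrictToAxis_one_yR : restrictToAxis 1 yR = 0 := by simp [yR]

theorem dvd_of_restrictToAxis_eq_zero {i : Fin 2} {a : Rxy} (ha : restrictToAxis i a = 0) :
    ![xR, yR] i ∣ a := by
  obtain ⟨p, rfl⟩ := Ideal.Quotient.mk_surjective a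
  rw [restrictToAxis_mk] at ha
  have := map_dvd (Ideal.Quotient.mk (Ideal.span {X 0 * X 1})) (X_dvd_sub_aeval_update_zero i p)
  rw [ha, sub_zero] at this
  fin_cases i <;> exact this

theorem dvd_of_mul_xR_eq_mul_yR {a b : Rxy} (h : a * xR = b * yR) : yR ∣ a ∧ xR ∣ b :=
  ⟨dvd_of_restrictToAxis_eq_zero (i := 1) (by simpa using congrArg (restrictToAxis 1) h),
    dvd_of_restrictToAxis_eq_zero (i := 0) (by simpa using (congrArg (restrictToAxis 0) h).symm)⟩

theorem xR_add_yR_mem_nonZeroDivisors : xR + yR ∈ nonZeroDivisors Rxy := by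
  refine mem_nonZeroDivisors_iff_right.mpr fun f hf ↦ ?_
  obtain ⟨g, rfl⟩ : yR ∣ f :=
    dvd_of_restrictToAxis_eq_zero (i := 1) (by simpa using congrArg (restrictToAxis 1) hf)
  obtain ⟨h, rfl⟩ : xR ∣ g :=
    dvd_of_restrictToAxis_eq_zero (i := 0) (by simpa using congrArg (restrictToAxis 0) hf)
  rw [← mul_assoc, mul_comm yR, xR_mul_yR, zero_mul]

noncomputable def logDerivationPoly :
    Derivation ℂ (MvPolynomial (Fin 2) ℂ) (MvPolynomial (Fin 2) ℂ) :=
  mkDerivation ℂ ![X 0, -X 1]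

theorem mkₐ_logDerivationPoly_eq_zero {p : MvPolynomial (Fin 2) ℂ}
    (hp : Ideal.Quotient.mkₐ ℂ (Ideal.span {X 0 * X 1}) p = 0) :
    Ideal.Quotient.mkₐ ℂ (Ideal.span {X 0 * X 1}) (logDerivationPoly p) = 0 := by
  obtain ⟨q, rfl⟩ := Ideal.mem_span_singleton'.mp (Ideal.Quotient.eq_zero_iff_mem.mp hp)
  have hxy : logDerivationPoly (X 0 * X 1) = 0 := by
    simp [logDerivationPoly, Derivation.leibniz, mul_comm]
  rw [Derivation.leibniz, hxy, smul_zero, zero_add, smul_eq_mul]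
  exact Ideal.Quotient.eq_zero_iff_mem.mpr
    (Ideal.mul_mem_right _ _ (Ideal.mem_span_singleton_self _))

noncomputable def logDerivation : Derivation ℂ Rxy Rxy :=
  Derivation.liftOfSurjective (Ideal.Quotient.mkₐ_surjective ℂ _)
    fun _ ↦ mkₐ_logDerivationPoly_eq_zero

theorem logDerivation_mk (p : MvPolynomial (Fin 2) ℂ) :
    logDerivation (Ideal.Quotient.mk _ p) = Ideal.Quotient.mk _ (logDerivationPoly p) :=
  Derivation.liftOfSurjective_apply _ (fun _ ↦ mkₐ_logDerivationPoly_eq_zero) p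

@[simp] theorem logDerivation_xR : logDerivation xR = xR := by
  simp [xR, logDerivation_mk, logDerivationPoly]

@[simp] theorem logDerivation_yR : logDerivation yR = -yR := by
  simp [yR, logDerivation_mk, logDerivationPoly]

section Kaehler

open KaehlerDifferential

theorem span_D_xR_D_yR_eq_top : Submodule.span Rxy {D ℂ Rxy xR, D ℂ Rxy yR} = ⊤ := by
  have hX : Set.range X = ({X 0, X 1} : Set (MvPolynomial (Fin 2) ℂ)) := by
    ext; simp [Fin.exists_fin_two, eq_comm]
  have hxy : ({xR, yR} : Set Rxy) = Ideal.Quotient.mkₐ ℂ _ '' Set.range X := by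
    rw [hX, Set.image_pair]; rfl
  rw [← Set.image_pair]
  refine span_D_image_eq_top_of_adjoin_eq_top ?_
  rw [hxy, Algebra.adjoin_image, adjoin_range_X, Algebra.map_top, AlgHom.range_eq_top]
  exact Ideal.Quotient.mkₐ_surjective ℂ _

theorem xR_smul_D_yR_add_yR_smul_D_xR_eq_zero : xR • D ℂ Rxy yR + yR • D ℂ Rxy xR = 0 := by
  rw [← Derivation.leibniz, xR_mul_yR, map_zero]

theorem ker_liftKaehlerDifferential_logDerivation :
    LinearMap.ker logDerivation.liftKaehlerDifferential = Submodule.torsion Rxy Ω[Rxy⁄ℂ] := by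
  refine le_antisymm (fun ω hω ↦ ⟨⟨_, xR_add_yR_mem_nonZeroDivisors⟩, ?_⟩)
    (LinearMap.torsion_le_ker _)
  have hω' : ω ∈ Submodule.span Rxy {D ℂ Rxy xR, D ℂ Rxy yR} :=
    span_D_xR_D_yR_eq_top ▸ Submodule.mem_top
  obtain ⟨a, b, rfl⟩ := Submodule.mem_span_pair.mp hω'
  have hab : a * xR = b * yR := by
    simp only [LinearMap.mem_ker, map_add, map_smul, Derivation.liftKaehlerDifferential_comp_D,
      logDerivation_xR, logDerivation_yR, smul_eq_mul] at hω
    linear_combination hω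
  obtain ⟨⟨c, rfl⟩, ⟨d, rfl⟩⟩ := dvd_of_mul_xR_eq_mul_yR hab
  show (xR + yR) • ((yR * c) • D ℂ Rxy xR + (xR * d) • D ℂ Rxy yR) = 0
  linear_combination (norm := module)
    (c * yR + d * xR) • xR_smul_D_yR_add_yR_smul_D_xR_eq_zero +
      xR_mul_yR • (c • D ℂ Rxy xR + d • D ℂ Rxy yR - c • D ℂ Rxy yR - d • D ℂ Rxy xR)

end Kaehler

/-- `L` is free of rank 1 over `R`, and the `R`-linear map `Ω¹_{R/ℂ} → L` with
`dx ↦ x·ξ`, `dy ↦ y·η` is well-defined, with kernel the torsion submodule. -/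
theorem stmt12 :
    Nonempty (Module.Basis (Fin 1) Rxy Lmod) ∧
    ∃ φ : KaehlerDifferential ℂ Rxy →ₗ[Rxy] Lmod,
      φ ((KaehlerDifferential.D ℂ Rxy) xR) = xR • ξL ∧
      φ ((KaehlerDifferential.D ℂ Rxy) yR) = yR • ηL ∧
      LinearMap.ker φ = Submodule.torsion Rxy (KaehlerDifferential ℂ Rxy) := by
  let e : Lmod ≃ₗ[Rxy] Rxy := quotSpanOneOneEquiv Rxy
  have heξ : e ξL = 1 := by simp [e, ξL]
  have heη : e ηL = -1 := by simp [e, ηL]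
  refine ⟨⟨(Module.Basis.singleton (Fin 1) Rxy).map e.symm⟩,
    e.symm.toLinearMap ∘ₗ logDerivation.liftKaehlerDifferential, ?_, ?_, ?_⟩
  · rw [LinearMap.comp_apply, Derivation.liftKaehlerDifferential_comp_D, logDerivation_xR,
      LinearEquiv.coe_coe, e.symm_apply_eq, map_smul, heξ, smul_eq_mul, mul_one]
  · rw [LinearMap.comp_apply, Derivation.liftKaehlerDifferential_comp_D, logDerivation_yR,
      LinearEquiv.coe_coe, e.symm_apply_eq, map_smul, heη, smul_eq_mul]
    ring
  · rw [LinearEquiv.ker_comp, ker_liftKaehlerDifferential_logDerivation]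
end

section
/- Resolution of the structure sheaf of a simple normal crossing: let R = ℂ[x₁,…,x_n], k ≤ n, and A = R/(x₁⋯x_k). For I ⊆ {1,…,k} let A_I = R/(x_i : i ∈ I). Then the Čech-type complex 0 → A → ⊕_{|I|=1} A_I → ⊕_{|I|=2} A_I → ⋯ → A_{{1,…,k}} → 0, with maps given by alternating sums of quotient maps (u_I ↦ ∑_j (-1)^{j+1} u_{I∖{i_j}} restricted), is exact. -/
open MvPolynomial

/-- The index set `{1,…,k}` inside the variables `Fin n`. -/
def K18 (n k : ℕ) : Finset (Fin n) := Finset.univ.filter (fun i => (i : ℕ) < k)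

/-- `f = x₁⋯x_k`. -/
noncomputable def fk (n k : ℕ) : MvPolynomial (Fin n) ℂ := ∏ i ∈ K18 n k, X i

/-- `A = R/(x₁⋯x_k)`. -/
abbrev A18 (n k : ℕ) : Type := MvPolynomial (Fin n) ℂ ⧸ Ideal.span {fk n k}

/-- The ideal `(xᵢ : i ∈ s)`. -/
noncomputable def IS (n : ℕ) (s : Finset (Fin n)) : Ideal (MvPolynomial (Fin n) ℂ) :=
  Ideal.span ((fun i => (X i : MvPolynomial (Fin n) ℂ)) '' ↑s)

/-- `A_I = R/(xᵢ : i ∈ I)`. -/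
abbrev AI (n : ℕ) (s : Finset (Fin n)) : Type := MvPolynomial (Fin n) ℂ ⧸ IS n s

/-- The `j`-th cochain module `⊕_{|I| = j, I ⊆ {1,…,k}} A_I`. -/
def C18 (n k j : ℕ) : Type :=
  (s : {t : Finset (Fin n) // t ⊆ K18 n k ∧ t.card = j}) → AI n s.val

noncomputable instance (n k j : ℕ) : AddCommGroup (C18 n k j) :=
  Pi.addCommGroup

/-- The alternating-sum differential `d : C^j → C^{j+1}`,
`(d f)_I = ∑_{i ∈ I} (-1)^{pos(i,I)} (f_{I∖{i}} restricted)`. -/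
noncomputable def d18 (n k j : ℕ) (f : C18 n k j) : C18 n k (j + 1) :=
  fun s => ∑ i ∈ s.val.attach,
    ((-1 : ℤ) ^ (s.val.filter (fun a => a < i.val)).card) •
      (Ideal.Quotient.factor (S := IS n (s.val.erase i.val)) (T := IS n s.val)
          (Ideal.span_mono (Set.image_mono (by
            exact_mod_cast Finset.erase_subset i.val s.val)))
        (f ⟨s.val.erase i.val,
          ⟨(Finset.erase_subset i.val s.val).trans s.prop.1, by
            rw [Finset.card_erase_of_mem i.prop, s.prop.2]; rfl⟩⟩))

/-- The augmentation `A → ⊕_{|I|=1} A_I` given by the quotient maps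
(well-defined since `f = x₁⋯x_k ∈ (xᵢ)` for each `i ≤ k`). -/
noncomputable def e18 (n k : ℕ) (a : A18 n k) : C18 n k 1 :=
  fun s => Ideal.Quotient.factor (S := Ideal.span {fk n k}) (T := IS n s.val)
    (by
      rw [Ideal.span_le, Set.singleton_subset_iff]
      obtain ⟨i, hi⟩ := Finset.card_eq_one.mp s.prop.2
      have hiK : i ∈ K18 n k := s.prop.1 (by simp [hi])
      rw [fk, ← Finset.mul_prod_erase _ _ hiK]
      exact Ideal.mul_mem_right _ _
        (Ideal.subset_span ⟨i, by simp [hi], rfl⟩)) a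

/-!
Everything is compatible with the grading by monomials. The `x^e`-part of `A_I` is `ℂ` if `e`
vanishes on `I` and `0` otherwise, so the `x^e`-part of the complex is the simplicial cochain
complex of the full simplex on `Z(e) = {i ≤ k : e i = 0}`, augmented by the `x^e`-part of `A`,
which is `ℂ` exactly when `Z(e) ≠ ∅`. Coning off the least vertex of `Z(e)` gives a contracting
homotopy `h` with `d h + h d = id` (for `j = 1` the homotopy lands in `A`), which gives exactness
at every `⊕_{|I|=j} A_I`. Injectivity of `A → ⊕ A_{i}` is the monomial-ideal identity
`(x₁⋯x_k) = ⋂ᵢ (xᵢ)`.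
-/

namespace NormalCrossing

open Finset

section Coboundary

variable {α M : Type*} [LinearOrder α] [AddCommGroup M]

def faceSign (s : Finset α) (i : α) : ℤ := (-1) ^ (s.filter (fun a => a < i)).card

def coboundary (G : Finset α → M) (s : Finset α) : M := ∑ i ∈ s, faceSign s i • G (s.erase i)

def cone (v : α) (G : Finset α → M) (s : Finset α) : M := if v ∈ s then 0 else G (insert v s)

theorem faceSign_eq_one {s : Finset α} {i : α} (h : ∀ a ∈ s, i ≤ a) : faceSign s i = 1 := by
  rw [faceSign, filter_false_of_mem fun a ha => not_lt.2 (h a ha), card_empty, pow_zero]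

theorem faceSign_insert_of_lt {s : Finset α} {v i : α} (hv : v ∉ s) (hvi : v < i) :
    faceSign (insert v s) i = -faceSign s i := by
  rw [faceSign, filter_insert, if_pos hvi, card_insert_of_notMem fun h => hv (mem_filter.1 h).1,
    pow_succ, faceSign, mul_neg_one]

theorem faceSign_erase_of_lt {s : Finset α} {i i' : α} (hi : i ∈ s) (hii' : i < i') :
    faceSign (s.erase i) i' = -faceSign s i' := by
  have hmem : i ∈ s.filter (fun a => a < i') := mem_filter.2 ⟨hi, hii'⟩
  rw [faceSign, faceSign, filter_erase, ← insert_erase hmem,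
    card_insert_of_notMem (notMem_erase _ _), erase_insert (notMem_erase _ _), pow_succ,
    mul_neg_one, neg_neg]

theorem faceSign_erase_of_gt {s : Finset α} {i i' : α} (hi'i : i' < i) :
    faceSign (s.erase i) i' = faceSign s i' := by
  rw [faceSign, faceSign, filter_erase, erase_eq_of_notMem fun h => (mem_filter.1 h).2.not_gt hi'i]

theorem faceSign_mul_faceSign_erase {s : Finset α} {i i' : α} (hi : i ∈ s) (hi' : i' ∈ s)
    (hne : i ≠ i') :
    faceSign s i * faceSign (s.erase i) i' = -(faceSign s i' * faceSign (s.erase i') i) := by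
  rcases hne.lt_or_gt with h | h
  · rw [faceSign_erase_of_lt hi h, faceSign_erase_of_gt h, mul_neg, mul_comm]
  · rw [faceSign_erase_of_gt h, faceSign_erase_of_lt hi' h, mul_neg, neg_neg, mul_comm]

theorem coboundary_congr {G G' : Finset α → M} {s : Finset α}
    (h : ∀ i ∈ s, G (s.erase i) = G' (s.erase i)) : coboundary G s = coboundary G' s :=
  sum_congr rfl fun i hi => by rw [h i hi]

theorem coboundary_singleton (G : Finset α → M) (i : α) : coboundary G {i} = G ∅ := by
  rw [coboundary, sum_singleton, erase_singleton, faceSign_eq_one (by simp), one_smul]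

theorem map_coboundary {N : Type*} [AddCommGroup N] (φ : M →+ N) (G : Finset α → M)
    (s : Finset α) :
    φ (coboundary G s) = coboundary (fun t => φ (G t)) s := by
  simp only [coboundary, map_sum, map_zsmul]

theorem coboundary_coboundary (G : Finset α → M) (s : Finset α) :
    coboundary (coboundary G) s = 0 := by
  simp only [coboundary, smul_sum, smul_smul]
  rw [sum_sigma']
  refine sum_involution (fun p _ => ⟨p.2, p.1⟩) (fun p hp => ?_) (fun p hp _ hswap => ?_)
    (fun p hp => ?_) (fun p _ => rfl)
  · obtain ⟨hi, hi'⟩ := mem_sigma.1 hp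
    obtain ⟨hne, hi'⟩ := mem_erase.1 hi'
    simp only
    rw [faceSign_mul_faceSign_erase hi hi' hne.symm, neg_smul, erase_right_comm, neg_add_cancel]
  · exact absurd (congrArg Sigma.fst hswap) (mem_erase.1 (mem_sigma.1 hp).2).1
  · obtain ⟨hi, hi'⟩ := mem_sigma.1 hp
    exact mem_sigma.2 ⟨mem_of_mem_erase hi', mem_erase.2 ⟨(mem_erase.1 hi').1.symm, hi⟩⟩

theorem coboundary_cone_add_cone_coboundary (G : Finset α → M) {s : Finset α} {v : α}
    (hv : ∀ a ∈ s, v ≤ a) : coboundary (cone v G) s + cone v (coboundary G) s = G s := by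
  by_cases hvs : v ∈ s
  · have hface : ∀ i ∈ s, i ≠ v → cone v G (s.erase i) = 0 := fun i _ hiv =>
      if_pos (mem_erase.2 ⟨hiv.symm, hvs⟩)
    rw [cone, if_pos hvs, add_zero, coboundary,
      sum_eq_single_of_mem v hvs fun i hi hiv => by rw [hface i hi hiv, smul_zero],
      faceSign_eq_one hv, one_smul, cone, if_neg (notMem_erase v s), insert_erase hvs]
  · have hface : ∀ i ∈ s, faceSign (insert v s) i • G ((insert v s).erase i)
        = -(faceSign s i • cone v G (s.erase i)) := fun i hi => by
      have hvi : v < i := (hv i hi).lt_of_ne fun h => hvs (h ▸ hi)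
      rw [cone, if_neg fun h => hvs (mem_of_mem_erase h), erase_insert_of_ne hvi.ne,
        faceSign_insert_of_lt hvs hvi, neg_smul]
    rw [cone, if_neg hvs]
    unfold coboundary
    rw [sum_insert hvs, erase_insert hvs, sum_congr rfl hface, sum_neg_distrib,
      faceSign_eq_one (by simpa using hv), one_smul]
    abel

end Coboundary

section Monomials

variable {σ R : Type*} [CommSemiring R]

def Avoids (s : Finset σ) (e : σ →₀ ℕ) : Prop := ∀ i ∈ s, e i = 0

theorem Avoids.mono {s t : Finset σ} {e : σ →₀ ℕ} (h : Avoids s e) (hts : t ⊆ s) : Avoids t e :=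
  fun i hi => h i (hts hi)

theorem Avoids.insert [DecidableEq σ] {s : Finset σ} {e : σ →₀ ℕ} (h : Avoids s e) {v : σ}
    (hv : e v = 0) : Avoids (insert v s) e := by
  intro i hi
  rcases mem_insert.1 hi with rfl | hi
  exacts [hv, h i hi]

noncomputable def keepTerms (P : (σ →₀ ℕ) → Prop) [DecidablePred P] (p : MvPolynomial σ R) :
    MvPolynomial σ R :=
  AddMonoidAlgebra.ofCoeff ((AddMonoidAlgebra.coeff p).filter P)

theorem coeff_keepTerms (P : (σ →₀ ℕ) → Prop) [DecidablePred P] (p : MvPolynomial σ R)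
    (e : σ →₀ ℕ) : coeff e (keepTerms P p) = if P e then coeff e p else 0 :=
  rfl

theorem sum_single_one_le_iff [DecidableEq σ] {s : Finset σ} {d : σ →₀ ℕ} :
    ∑ i ∈ s, Finsupp.single i 1 ≤ d ↔ ∀ i ∈ s, d i ≠ 0 := by
  simp only [Finsupp.le_def, Finsupp.finsetSum_apply, Finsupp.single_apply, sum_ite_eq']
  refine forall_congr' fun i => ?_
  split_ifs with hi <;> simp [hi, Nat.one_le_iff_ne_zero]

theorem mem_span_prod_X_iff {s : Finset σ} {p : MvPolynomial σ R} :
    p ∈ Ideal.span {∏ i ∈ s, X i} ↔ ∀ i ∈ s, p ∈ Ideal.span {X i} := by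
  classical
  have hmon : ∏ i ∈ s, (X i : MvPolynomial σ R) = monomial (∑ i ∈ s, Finsupp.single i 1) 1 :=
    (monomial_sum_one s _).symm
  simp only [hmon, ← Set.image_singleton (f := fun m => monomial m (1 : R)),
    ← Set.image_singleton (f := (X : σ → MvPolynomial σ R)), mem_ideal_span_monomial_image,
    mem_ideal_span_X_image]
  simp only [mem_support_iff, Set.mem_singleton_iff, exists_eq_left, sum_single_one_le_iff]
  exact ⟨fun h i hi m hm => h m hm i hi, fun h m hm i hi => h i hi m hm⟩

end Monomials

section CoordinateQuotient

variable {n : ℕ}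

theorem mem_IS_iff {s : Finset (Fin n)} {p : MvPolynomial (Fin n) ℂ} :
    p ∈ IS n s ↔ ∀ e, Avoids s e → coeff e p = 0 := by
  rw [IS, show (fun i => X i) = (X : Fin n → MvPolynomial (Fin n) ℂ) from rfl,
    mem_ideal_span_X_image]
  refine forall_congr' fun e => ?_
  rw [mem_support_iff, Avoids, ← not_imp_not, not_not]
  simp

theorem mk_IS_eq_mk_iff {s : Finset (Fin n)} {p q : MvPolynomial (Fin n) ℂ} :
    Ideal.Quotient.mk (IS n s) p = Ideal.Quotient.mk (IS n s) q ↔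
      ∀ e, Avoids s e → coeff e p = coeff e q := by
  simp only [Ideal.Quotient.eq, mem_IS_iff, coeff_sub, sub_eq_zero]

variable {k j : ℕ}

abbrev IsFace (k j : ℕ) (t : Finset (Fin n)) : Prop := t ⊆ K18 n k ∧ t.card = j

theorem IsFace.erase {s : Finset (Fin n)} (hs : IsFace k (j + 1) s) {i : Fin n} (hi : i ∈ s) :
    IsFace k j (s.erase i) :=
  ⟨(erase_subset i s).trans hs.1, by rw [card_erase_of_mem hi, hs.2, Nat.add_sub_cancel]⟩

theorem IsFace.insert {s : Finset (Fin n)} (hs : IsFace k j s) {v : Fin n} (hv : v ∈ K18 n k)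
    (hvs : v ∉ s) : IsFace k (j + 1) (insert v s) :=
  ⟨insert_subset hv hs.1, by rw [card_insert_of_notMem hvs, hs.2]⟩

/-- A representative of the `t`-component of `u`; junk value `0` when `t` is not a face. -/
noncomputable def rep (u : C18 n k j) (t : Finset (Fin n)) : MvPolynomial (Fin n) ℂ :=
  if h : IsFace k j t then Quotient.out (u ⟨t, h⟩) else 0

theorem mk_rep (u : C18 n k j) {t : Finset (Fin n)} (ht : IsFace k j t) :
    Ideal.Quotient.mk (IS n t) (rep u t) = u ⟨t, ht⟩ := by
  rw [rep, dif_pos ht, Ideal.Quotient.mk_out]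

theorem coeff_rep_of_mk_eq {u : C18 n k j} {t : Finset (Fin n)} {ht : IsFace k j t}
    {p : MvPolynomial (Fin n) ℂ} (hp : Ideal.Quotient.mk (IS n t) p = u ⟨t, ht⟩)
    {e : Fin n →₀ ℕ} (he : Avoids t e) : coeff e (rep u t) = coeff e p :=
  mk_IS_eq_mk_iff.1 ((mk_rep u ht).trans hp.symm) e he

theorem coeff_rep_zero {t : Finset (Fin n)} (ht : IsFace k j t) {e : Fin n →₀ ℕ}
    (he : Avoids t e) : coeff e (rep (0 : C18 n k j) t) = 0 :=
  (coeff_rep_of_mk_eq (p := 0) (ht := ht) (map_zero _) he).trans (coeff_zero e)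

theorem C18.ext {u u' : C18 n k j}
    (h : ∀ t, IsFace k j t → ∀ e, Avoids t e → coeff e (rep u t) = coeff e (rep u' t)) :
    u = u' := by
  funext ⟨t, ht⟩
  rw [← mk_rep u ht, ← mk_rep u' ht, mk_IS_eq_mk_iff]
  exact h t ht

theorem d18_apply (u : C18 n k j) {s : Finset (Fin n)} (hs : IsFace k (j + 1) s) :
    d18 n k j u ⟨s, hs⟩ = Ideal.Quotient.mk (IS n s) (coboundary (rep u) s) := by
  rw [d18, coboundary, map_sum, ← sum_attach s]
  refine Finset.sum_congr rfl fun i _ => ?_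
  rw [map_zsmul, ← mk_rep u]
  rfl

theorem coeff_rep_d18 (u : C18 n k j) {s : Finset (Fin n)} (hs : IsFace k (j + 1) s)
    {e : Fin n →₀ ℕ} (he : Avoids s e) :
    coeff e (rep (d18 n k j u) s) = coboundary (fun t => coeff e (rep u t)) s := by
  rw [coeff_rep_of_mk_eq (d18_apply u hs).symm he]
  exact map_coboundary (coeffAddMonoidHom e) (rep u) s

theorem coeff_rep_e18 (p : MvPolynomial (Fin n) ℂ) {s : Finset (Fin n)}
    (hs : IsFace k 1 s) {e : Fin n →₀ ℕ} (he : Avoids s e) :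
    coeff e (rep (e18 n k (Ideal.Quotient.mk _ p)) s) = coeff e p :=
  coeff_rep_of_mk_eq (ht := hs) (Ideal.Quotient.factor_mk _ _).symm he

end CoordinateQuotient

section Contraction

variable {n k j : ℕ}

def zeroIndices (k : ℕ) (e : Fin n →₀ ℕ) : Finset (Fin n) := (K18 n k).filter (fun i => e i = 0)

theorem exists_min_zeroIndices {s : Finset (Fin n)} (hs : s ⊆ K18 n k) (hne : s.Nonempty)
    {e : Fin n →₀ ℕ} (he : Avoids s e) :
    ∃ v : Fin n, (zeroIndices k e).min = v ∧ ∀ a ∈ s, v ≤ a := by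
  obtain ⟨a, ha⟩ := hne
  obtain ⟨v, hv⟩ := min_of_mem (mem_filter.2 ⟨hs ha, he a ha⟩ : a ∈ zeroIndices k e)
  exact ⟨v, hv, fun b hb => min_le_of_eq (mem_filter.2 ⟨hs hb, he b hb⟩) hv⟩

theorem mem_zeroIndices_of_min_eq {e : Fin n →₀ ℕ} {v : Fin n}
    (hv : (zeroIndices k e).min = v) : v ∈ K18 n k ∧ e v = 0 :=
  mem_filter.1 (mem_of_min hv)

/-- The cone vertex depends on the monomial, so the cone construction is applied term by term:
the `e`-term is coned off the least `v ∈ K18 n k` with `e v = 0`. -/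
noncomputable def contraction (k : ℕ) (f : Finset (Fin n) → MvPolynomial (Fin n) ℂ)
    (t : Finset (Fin n)) : MvPolynomial (Fin n) ℂ :=
  ∑ v ∈ K18 n k, keepTerms (fun e => (zeroIndices k e).min = v) (cone v f t)

theorem coeff_contraction (f : Finset (Fin n) → MvPolynomial (Fin n) ℂ) (t : Finset (Fin n))
    {e : Fin n →₀ ℕ} {v : Fin n} (hv : (zeroIndices k e).min = v) :
    coeff e (contraction k f t) = cone v (fun t => coeff e (f t)) t := by
  have hother : ∀ w ∈ K18 n k, w ≠ v →
      coeff e (keepTerms (fun e => (zeroIndices k e).min = w) (cone w f t)) = 0 := by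
    intro w _ hwv
    rw [coeff_keepTerms, if_neg (by rw [hv]; exact_mod_cast hwv.symm)]
  rw [contraction, coeff_sum, sum_eq_single_of_mem v (mem_zeroIndices_of_min_eq hv).1 hother,
    coeff_keepTerms, if_pos hv, cone, cone]
  split_ifs <;> simp

noncomputable def contractingHomotopy (u : C18 n k (j + 1)) : C18 n k j :=
  fun t => Ideal.Quotient.mk _ (contraction k (rep u) t.1)

theorem cone_coboundary_eq_zero {u : C18 n k j} (hu : d18 n k j u = 0) {s : Finset (Fin n)}
    (hs : IsFace k j s) {e : Fin n →₀ ℕ} (he : Avoids s e) {v : Fin n}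
    (hv : (zeroIndices k e).min = v) : cone v (coboundary fun t => coeff e (rep u t)) s = 0 := by
  obtain ⟨hvK, hev⟩ := mem_zeroIndices_of_min_eq hv
  rw [cone]
  split_ifs with hvs
  · rfl
  · rw [← coeff_rep_d18 u (hs.insert hvK hvs) (he.insert hev), hu,
      coeff_rep_zero (hs.insert hvK hvs) (he.insert hev)]

end Contraction

section Exactness

variable {n k j : ℕ}

theorem d18_d18 (w : C18 n k j) : d18 n k (j + 1) (d18 n k j w) = 0 :=
  C18.ext fun s hs e he => by
    rw [coeff_rep_d18 _ hs he, coeff_rep_zero hs he,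
      coboundary_congr (G' := coboundary fun t => coeff e (rep w t))
        fun i hi => coeff_rep_d18 w (hs.erase hi) (he.mono (erase_subset i s)),
      coboundary_coboundary]

theorem d18_e18 (a : A18 n k) : d18 n k 1 (e18 n k a) = 0 := by
  obtain ⟨p, rfl⟩ := Ideal.Quotient.mk_surjective a
  refine C18.ext fun s hs e he => ?_
  rw [coeff_rep_d18 _ hs he, coeff_rep_zero hs he,
    coboundary_congr (G' := coboundary fun _ => coeff e p) fun i hi => ?_, coboundary_coboundary]
  obtain ⟨a, ha⟩ := card_eq_one.1 (hs.erase hi).2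
  rw [coeff_rep_e18 p (hs.erase hi) (he.mono (erase_subset i s)), ha, coboundary_singleton]

theorem exact_d18 (j : ℕ) : Function.Exact (d18 n k j) (d18 n k (j + 1)) := by
  refine fun u => ⟨fun hu => ?_, fun ⟨w, hw⟩ => hw ▸ d18_d18 w⟩
  refine ⟨contractingHomotopy u, C18.ext fun s hs e he => ?_⟩
  obtain ⟨v, hv, hvs⟩ := exists_min_zeroIndices hs.1 (card_pos.1 (hs.2 ▸ j.succ_pos)) he
  rw [coeff_rep_d18 _ hs he,
    ← coboundary_cone_add_cone_coboundary (fun t => coeff e (rep u t)) hvs,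
    cone_coboundary_eq_zero hu hs he hv, add_zero]
  refine coboundary_congr fun i hi => ?_
  rw [coeff_rep_of_mk_eq (ht := hs.erase hi) rfl (he.mono (erase_subset i s)),
    coeff_contraction _ _ hv]

theorem exact_e18_d18 : Function.Exact (e18 n k) (d18 n k 1) := by
  refine fun u => ⟨fun hu => ?_, fun ⟨a, ha⟩ => ha ▸ d18_e18 a⟩
  refine ⟨Ideal.Quotient.mk _ (contraction k (rep u) ∅), C18.ext fun s hs e he => ?_⟩
  obtain ⟨v, hv, hvs⟩ := exists_min_zeroIndices hs.1 (card_pos.1 (hs.2 ▸ one_pos)) he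
  obtain ⟨i, rfl⟩ := card_eq_one.1 hs.2
  rw [coeff_rep_e18 _ hs he, coeff_contraction _ _ hv,
    ← coboundary_singleton (cone v fun t => coeff e (rep u t)) i,
    ← coboundary_cone_add_cone_coboundary (fun t => coeff e (rep u t)) hvs,
    cone_coboundary_eq_zero hu hs he hv, add_zero]

theorem e18_injective : Function.Injective (e18 n k) := by
  intro a b hab
  obtain ⟨p, rfl⟩ := Ideal.Quotient.mk_surjective a
  obtain ⟨q, rfl⟩ := Ideal.Quotient.mk_surjective b
  refine Ideal.Quotient.eq.2 (mem_span_prod_X_iff.2 fun i hi => ?_)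
  have h : Ideal.Quotient.mk (IS n {i}) p = Ideal.Quotient.mk (IS n {i}) q :=
    congrFun hab ⟨{i}, singleton_subset_iff.2 hi, card_singleton i⟩
  rwa [Ideal.Quotient.eq, IS, coe_singleton, Set.image_singleton] at h

end Exactness

end NormalCrossing

theorem stmt18_general (n k : ℕ) :
    Function.Injective (e18 n k) ∧
    Function.Exact (e18 n k) (d18 n k 1) ∧
    (∀ j : ℕ, 1 ≤ j → Function.Exact (d18 n k j) (d18 n k (j + 1))) :=
  ⟨NormalCrossing.e18_injective, NormalCrossing.exact_e18_d18,
    fun j _ => NormalCrossing.exact_d18 j⟩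

/-- Exactness of the Čech-type resolution
`0 → A → ⊕_{|I|=1} A_I → ⊕_{|I|=2} A_I → ⋯ → A_{{1,…,k}} → 0`
of the structure ring of a simple normal crossing. -/
theorem stmt18 (n k : ℕ) (hk1 : 1 ≤ k) (hkn : k ≤ n) :
    Function.Injective (e18 n k) ∧
    Function.Exact (e18 n k) (d18 n k 1) ∧
    (∀ j : ℕ, 1 ≤ j → Function.Exact (d18 n k j) (d18 n k (j + 1))) :=
  stmt18_general n k
end
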